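/- For all λ > 0, γ ≥ 0 and β > 0, ∫₀^∞ e^{−γh²} · (1/(βh²))(1 − e^{−βh²}) · (8/3)π²λ^{5/2} h⁴ e^{−λπh²} dh = (2λπ/(3β)) [ (1 + γ/(λπ))^{−3/2} − (1 + (γ+β)/(λπ))^{−3/2} ]. Equivalently, if H has Nakagami(5/2, 5/(2λπ)) density (8/3)π²λ^{5/2}h⁴e^{−λπh²} and, conditionally on H = h, R² is uniformly distributed on [0, h²], then E[e^{−γH² − βR²}] equals the right-hand side. -/

import Mathlib

/-!
Given `H = h`, the Laplace transform of the uniform `R²` is `(1 - e^{-βh²}) / (βh²)`, whose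
denominator cancels against the `h⁴` of the density `C h⁴ e^{-λπh²}`, `C = (8/3)π²λ^{5/2}`. The
integrand is therefore `(C / β) h² (e^{-(λπ+γ)h²} - e^{-(λπ+γ+β)h²})`, and each term is a
Gaussian second moment, `∫₀^∞ h² e^{-ah²} dh = Γ(3/2) a^{-3/2} / 2 = (√π / 4) a^{-3/2}`.
Finally `C √π / 4 = (2/3)(λπ)^{5/2}`.
-/

open MeasureTheory Set Real

lemma integrableOn_sq_mul_exp_neg_mul_sq {a : ℝ} (ha : 0 < a) :
    IntegrableOn (fun h : ℝ => h ^ 2 * exp (-(a * h ^ 2))) (Ioi 0) := by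
  simpa [neg_mul] using
    (integrable_rpow_mul_exp_neg_mul_sq ha (s := 2) (by norm_num)).integrableOn (s := Ioi 0)

lemma Gamma_three_halves : Gamma (3 / 2) = √π / 2 := by
  rw [show (3 : ℝ) / 2 = 1 / 2 + 1 by norm_num, Gamma_add_one (by norm_num), Gamma_one_half_eq]
  ring

lemma integral_Ioi_sq_mul_exp_neg_mul_sq {a : ℝ} (ha : 0 < a) :
    ∫ h in Ioi (0 : ℝ), h ^ 2 * exp (-(a * h ^ 2)) = √π / 4 * a ^ (-(3 : ℝ) / 2) := by
  have := integral_rpow_mul_exp_neg_mul_rpow (q := 2) two_pos (by norm_num) ha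
  norm_num [Gamma_three_halves] at this
  rw [this, neg_div]
  ring

lemma one_add_div_rpow {L x : ℝ} (hL : 0 < L) (hLx : 0 ≤ L + x) (s : ℝ) :
    (1 + x / L) ^ s = (L + x) ^ s / L ^ s := by
  rw [show 1 + x / L = (L + x) / L by field_simp, div_rpow hLx hL.le]

lemma exp_mul_laplace_uniform_mul_eq {γ β L C h : ℝ} (hβ : β ≠ 0) (hh : h ≠ 0) :
    exp (-(γ * h ^ 2)) * (1 / (β * h ^ 2) * (1 - exp (-(β * h ^ 2)))) *
        (C * h ^ 4 * exp (-(L * h ^ 2))) =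
      C / β * (h ^ 2 * exp (-((L + γ) * h ^ 2)) - h ^ 2 * exp (-((L + (γ + β)) * h ^ 2))) := by
  have e1 : exp (-((L + γ) * h ^ 2)) = exp (-(γ * h ^ 2)) * exp (-(L * h ^ 2)) := by
    rw [← exp_add]; ring_nf
  have e2 : exp (-((L + (γ + β)) * h ^ 2)) =
      exp (-(γ * h ^ 2)) * exp (-(β * h ^ 2)) * exp (-(L * h ^ 2)) := by
    rw [← exp_add, ← exp_add]; ring_nf
  rw [e1, e2]
  field_simp

/-- Joint Laplace transform of `(H_{I'}², R_{I'}²)` at a typical min-interference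
(tropical interference handover) epoch: if `H` has Nakagami(5/2, 5/(2λπ)) density
`(8/3)π²λ^{5/2}h⁴e^{−λπh²}` and, given `H = h`, `R²` is uniform on `[0,h²]`, then
`∫₀^∞ e^{−γh²} (1/(βh²))(1 − e^{−βh²}) · (8/3)π²λ^{5/2} h⁴ e^{−λπh²} dh
  = (2λπ/(3β))[(1 + γ/(λπ))^{−3/2} − (1 + (γ+β)/(λπ))^{−3/2}]`. -/
theorem stmt_11 (lam γ β : ℝ) (hlam : 0 < lam) (hγ : 0 ≤ γ) (hβ : 0 < β) :
    (∫ h in Ioi (0:ℝ),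
        Real.exp (-(γ * h ^ 2)) * (1 / (β * h ^ 2) * (1 - Real.exp (-(β * h ^ 2)))) *
          (8/3 * Real.pi ^ 2 * lam ^ ((5:ℝ)/2) * h ^ 4 * Real.exp (-(lam * Real.pi * h ^ 2)))) =
      2 * lam * Real.pi / (3 * β) *
        ((1 + γ / (lam * Real.pi)) ^ (-(3:ℝ)/2) -
          (1 + (γ + β) / (lam * Real.pi)) ^ (-(3:ℝ)/2)) := by
  set L := lam * π
  have hL : 0 < L := by positivity
  have h₁ : 0 < L + γ := by positivity
  have h₂ : 0 < L + (γ + β) := by positivity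
  have hconst : 8 / 3 * π ^ 2 * lam ^ ((5 : ℝ) / 2) * (√π / 4) = 2 / 3 * L / L ^ (-(3 : ℝ) / 2) := by
    have hpi : π ^ ((5 : ℝ) / 2) = π ^ 2 * √π := by
      rw [sqrt_eq_rpow, ← rpow_natCast, ← rpow_add pi_pos]
      norm_num
    have hL52 : L / L ^ (-(3 : ℝ) / 2) = lam ^ ((5 : ℝ) / 2) * π ^ ((5 : ℝ) / 2) := by
      rw [← mul_rpow hlam.le pi_pos.le, show (5 : ℝ) / 2 = 1 - (-3) / 2 by norm_num,
        rpow_sub hL, rpow_one]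
    rw [mul_div_assoc, hL52, hpi]
    ring
  rw [setIntegral_congr_fun measurableSet_Ioi
      fun h hh => exp_mul_laplace_uniform_mul_eq hβ.ne' (ne_of_gt (mem_Ioi.mp hh)),
    integral_const_mul, integral_sub (integrableOn_sq_mul_exp_neg_mul_sq h₁)
      (integrableOn_sq_mul_exp_neg_mul_sq h₂),
    integral_Ioi_sq_mul_exp_neg_mul_sq h₁, integral_Ioi_sq_mul_exp_neg_mul_sq h₂,
    one_add_div_rpow hL h₁.le, one_add_div_rpow hL h₂.le]
  linear_combination ((L + γ) ^ (-(3:ℝ)/2) - (L + (γ + β)) ^ (-(3:ℝ)/2)) / β * hconst
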